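/- arXiv:1105.1922 — 8 statements merged into one kernel-verified Lean document; each statement's English description precedes it below -/
import Mathlib

section
/- Let D ⊂ ℝ^N be a compact convex set and φ: D → ℝ^N a continuous map. Let ε > 0 and let δ > 0 be such that for all x, y ∈ D with ‖x − y‖ < δ one has ‖φ(x) − φ(y)‖ < ε. Suppose v^1, …, v^{N+1} ∈ D satisfy ‖v^i − v^j‖ < δ for all i, j ∈ {1, …, N+1}, and suppose λ ∈ ℝ^{N+1} satisfies λ_j ≥ 0 for all j, ∑_{j=1}^{N+1} λ_j = 1, and ∑_{j=1}^{N+1} λ_j φ(v^j) = ∑_{j=1}^{N+1} λ_j v^j. Then the point v* := ∑_{j=1}^{N+1} λ_j v^j lies in D and satisfies ‖φ(v*) − v*‖ < ε. -/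
/-- A complete simplex on the top level yields an approximate fixed point:
if `φ` is continuous on the compact convex set `D`, `δ` is a modulus of
`ε`-continuity for `φ` on `D`, the points `v 1, …, v (N+1)` of `D` are pairwise
`δ`-close, and `λ` is a convex-combination coefficient vector with
`∑ λ_j φ(v_j) = ∑ λ_j v_j`, then `v* = ∑ λ_j v_j ∈ D` and `‖φ(v*) − v*‖ < ε`. -/
theorem approximate_fixed_point_of_complete_simplex
    {N : ℕ} (D : Set (EuclideanSpace ℝ (Fin N)))
    (hDcomp : IsCompact D) (hDconv : Convex ℝ D)
    (φ : EuclideanSpace ℝ (Fin N) → EuclideanSpace ℝ (Fin N))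
    (hφ : ContinuousOn φ D)
    (ε δ : ℝ) (hε : 0 < ε) (hδ : 0 < δ)
    (hmod : ∀ x ∈ D, ∀ y ∈ D, ‖x - y‖ < δ → ‖φ x - φ y‖ < ε)
    (v : Fin (N + 1) → EuclideanSpace ℝ (Fin N)) (hv : ∀ j, v j ∈ D)
    (hclose : ∀ i j, ‖v i - v j‖ < δ)
    (lam : Fin (N + 1) → ℝ) (hlam : ∀ j, 0 ≤ lam j)
    (hsum : ∑ j, lam j = 1)
    (hfix : ∑ j, lam j • φ (v j) = ∑ j, lam j • v j) :
    (∑ j, lam j • v j) ∈ D ∧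
      ‖φ (∑ j, lam j • v j) - ∑ j, lam j • v j‖ < ε := by
  set w := ∑ j, lam j • v j with hw
  have hmem : w ∈ D := hDconv.sum_mem (fun j _ => hlam j) hsum (fun j _ => hv j)
  refine ⟨hmem, ?_⟩
  -- find an index with positive weight
  obtain ⟨j₀, -, hj₀⟩ : ∃ j ∈ Finset.univ, 0 < lam j := by
    by_contra h
    push_neg at h
    have : ∑ j, lam j = 0 := Finset.sum_eq_zero fun j hj =>
      le_antisymm (h j hj) (hlam j)
    rw [hsum] at this; norm_num at this
  -- key strict sum lemma
  have key : ∀ (f : Fin (N+1) → EuclideanSpace ℝ (Fin N)) (c : ℝ),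
      (∀ i, ‖f i‖ < c) → ‖∑ i, lam i • f i‖ < c := by
    intro f c hf
    calc ‖∑ i, lam i • f i‖ ≤ ∑ i, ‖lam i • f i‖ := norm_sum_le _ _
      _ < ∑ i : Fin (N+1), lam i * c := by
          refine Finset.sum_lt_sum (fun i _ => ?_) ⟨j₀, Finset.mem_univ _, ?_⟩
          · rw [norm_smul, Real.norm_of_nonneg (hlam i)]
            exact mul_le_mul_of_nonneg_left (hf i).le (hlam i)
          · rw [norm_smul, Real.norm_of_nonneg (hlam j₀)]
            exact mul_lt_mul_of_pos_left (hf j₀) hj₀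
      _ = c := by rw [← Finset.sum_mul, hsum, one_mul]
  have hdist : ∀ j, ‖w - v j‖ < δ := by
    intro j
    have : w - v j = ∑ i, lam i • (v i - v j) := by
      simp [hw, smul_sub, Finset.sum_sub_distrib, ← Finset.sum_smul, hsum]
    rw [this]
    exact key _ _ (fun i => hclose i j)
  have : φ w - w = ∑ j, lam j • (φ w - φ (v j)) := by
    simp only [smul_sub, Finset.sum_sub_distrib, ← Finset.sum_smul, hsum,
      one_smul, hfix]
  rw [this]
  exact key _ _ (fun j => hmod w hmem (v j) (hv j) (hdist j))
end

section
/- Let Γμ: ℝ^N_+ → ℝ^N_+ be monotone and satisfy the small gain condition, let κ_0 > 0 and κ_Γ > κ_h > 0, and let φ: ℝ^N_+ → ℝ^N be defined by φ(v) = Γμ(v)·(1 + min{0, (κ_Γ − 2‖v‖)/(‖v‖ + κ_0)}) + max{0, κ_h − 2‖v‖}·e. If s ∈ ℝ^N_+ is a fixed point of φ, i.e., s = φ(s), then s is a decay point of Γμ, i.e., Γμ(s) ≪ s; moreover ‖s‖ < κ_h/2. -/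
/-- Proposition (fixed points of `φ` are decay points): if `Γμ : ℝ^N_+ → ℝ^N_+` is
monotone and satisfies the small gain condition, `κ_0 > 0`, `κ_Γ > κ_h > 0`, and
`φ(v) = Γμ(v)·(1 + min{0, (κ_Γ − 2‖v‖)/(‖v‖ + κ_0)}) + max{0, κ_h − 2‖v‖}·e`,
then any fixed point `s = φ(s)` with `s ∈ ℝ^N_+` satisfies `Γμ(s) ≪ s` and
`‖s‖ < κ_h / 2`. -/
theorem fixed_point_is_decay_point
    {N : ℕ}
    (Γμ : EuclideanSpace ℝ (Fin N) → EuclideanSpace ℝ (Fin N))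
    (hmaps : ∀ v : EuclideanSpace ℝ (Fin N), (∀ i, 0 ≤ v i) → ∀ i, 0 ≤ Γμ v i)
    (hmono : ∀ v w : EuclideanSpace ℝ (Fin N), (∀ i, 0 ≤ v i) → (∀ i, 0 ≤ w i) →
      (∀ i, v i ≤ w i) → ∀ i, Γμ v i ≤ Γμ w i)
    (hsg : ∀ s : EuclideanSpace ℝ (Fin N), (∀ i, 0 ≤ s i) → s ≠ 0 →
      ¬ (∀ i, s i ≤ Γμ s i))
    (κ₀ κΓ κh : ℝ) (hκ₀ : 0 < κ₀) (hκh : 0 < κh) (hκΓ : κh < κΓ)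
    (φ : EuclideanSpace ℝ (Fin N) → EuclideanSpace ℝ (Fin N))
    (hφ : ∀ (v : EuclideanSpace ℝ (Fin N)) (i : Fin N),
      φ v i = Γμ v i * (1 + min 0 ((κΓ - 2 * ‖v‖) / (‖v‖ + κ₀)))
        + max 0 (κh - 2 * ‖v‖))
    (s : EuclideanSpace ℝ (Fin N)) (hs : ∀ i, 0 ≤ s i) (hfix : s = φ s) :
    (∀ i, Γμ s i < s i) ∧ ‖s‖ < κh / 2 := by
  have hΓ := hmaps s hs
  have hsi : ∀ i, s i = Γμ s i * (1 + min 0 ((κΓ - 2 * ‖s‖) / (‖s‖ + κ₀)))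
      + max 0 (κh - 2 * ‖s‖) := by
    intro i
    conv_lhs => rw [hfix]
    exact hφ s i
  have hlt : ‖s‖ < κh / 2 := by
    by_contra h
    push_neg at h
    have hsne : s ≠ 0 := by
      intro h0
      rw [h0, norm_zero] at h
      linarith
    have hmax : max 0 (κh - 2 * ‖s‖) = 0 := max_eq_left (by linarith)
    refine hsg s hs hsne (fun i => ?_)
    have hmin : min 0 ((κΓ - 2 * ‖s‖) / (‖s‖ + κ₀)) ≤ 0 := min_le_left _ _
    have := hsi i
    rw [hmax] at this
    nlinarith [hΓ i]
  refine ⟨fun i => ?_, hlt⟩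
  have hden : 0 < ‖s‖ + κ₀ := by positivity
  have hmin : min 0 ((κΓ - 2 * ‖s‖) / (‖s‖ + κ₀)) = 0 := by
    apply min_eq_left
    apply div_nonneg _ hden.le
    linarith
  have hmax : max 0 (κh - 2 * ‖s‖) = κh - 2 * ‖s‖ := max_eq_right (by linarith)
  have := hsi i
  rw [hmin, hmax] at this
  have hns : 0 ≤ ‖s‖ := norm_nonneg s
  nlinarith
end

section
/- Let Γμ: ℝ^N_+ → ℝ^N_+ be monotone, let κ_0 > 0, κ_Γ > κ_h > 0, δ > 0, and let φ(v) = Γμ(v)·(1 + min{0, (κ_Γ − 2‖v‖)/(‖v‖ + κ_0)}) + max{0, κ_h − 2‖v‖}·e. Let c ∈ ℝ^N satisfy c ≫ 0 and ‖c‖ < κ_Γ/2. Let y^1, …, y^{N+1} be the vertices of an N-simplex of the two-layered triangulation K̃_1(δ), written y^j = (v^j, t_j) with v^j ∈ ℝ^N_+ and t_j ∈ {0, 1}: that is, y^{j+1} = y^j + d^j for j = 1, …, N, where the increments d^j are pairwise distinct elements of {δe_1, …, δe_N, e_{N+1}} (e_i the i-th standard basis vector of ℝ^{N+1}). Assume ‖v^j‖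 > κ_Γ + κ_0 + δ for all j = 1, …, N+1. Define labels l(y^j) = (1 − t_j)c + t_j φ(v^j) − v^j and the (N+1)×(N+1) labeling matrix L whose j-th column is (1, l(y^j)^T)^T. Then the simplex is not complete: there is no matrix W ∈ ℝ^{(N+1)×(N+1)} with L·W = I_{N+1} such that every row of W is lexicographically positive. -/
/-!
Test a would-be lexicographic inverse `W` of `L` against `q = (0, v¹)`. Since `L * W = 1`,
`q = (qᵀL) W` is a combination of the lexicographically positive rows of `W` with coefficients
`(qᵀL)_j = ⟪v¹, l(y^j)⟫`. Far out, the damping factor makes `φ(v^j) ≤ 0`, and `v¹ ≤ v^j` because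
all increments are nonnegative, so `⟪v¹, l(y^j)⟫ ≤ (1 - t_j) ‖v¹‖ ‖c‖ - ‖v¹‖² ≤ 0`. Hence `q` is
lexicographically nonpositive, although it is nonnegative and nonzero.
-/

/-- A row vector is lexicographically positive if its first nonzero entry is
positive. -/
def LexPosRow {n : ℕ} (w : Fin n → ℝ) : Prop :=
  ∃ j, 0 < w j ∧ ∀ i, i < j → w i = 0

open Matrix
open scoped InnerProductSpace

theorem lexPosRow_iff {n : ℕ} {w : Fin n → ℝ} : LexPosRow w ↔ 0 < toLex w :=
  ⟨fun ⟨j, hj, hz⟩ => ⟨j, fun i hi => (hz i hi).symm, hj⟩,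
    fun ⟨j, hz, hj⟩ => ⟨j, hj, fun i hi => (hz i hi).symm⟩⟩

theorem toLex_smul_nonpos {ι : Type*} [LinearOrder ι] {w : ι → ℝ} {a : ℝ} (ha : a ≤ 0)
    (hw : 0 < toLex w) : toLex (a • w) ≤ 0 := by
  obtain ⟨j, hz, hj⟩ := hw
  rcases ha.lt_or_eq with ha | rfl
  · refine le_of_lt ⟨j, fun i hi => ?_, mul_neg_of_neg_of_pos ha hj⟩
    change a * w i = 0
    have hwi : w i = 0 := (hz i hi).symm
    rw [hwi, mul_zero]
  · simp

theorem exists_pos_vecMul_of_mul_eq_one {m n : Type*} [Fintype m] [DecidableEq m]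
    [LinearOrder m] [Fintype n] {L : Matrix m n ℝ} {W : Matrix n m ℝ} (hLW : L * W = 1)
    (hW : ∀ j, 0 < toLex (W j)) {q : m → ℝ} (hq : 0 < toLex q) : ∃ j, 0 < (q ᵥ* L) j := by
  by_contra! h
  have hq_eq : q = ∑ j, (q ᵥ* L) j • W j := by
    rw [← vecMul_eq_sum, vecMul_vecMul, hLW, vecMul_one]
  have : toLex q ≤ 0 := by
    rw [hq_eq, ← coe_toLexLinearEquiv ℝ, map_sum]
    exact Finset.sum_nonpos fun j _ => toLex_smul_nonpos (h j) (hW j)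
  exact this.not_gt hq

theorem toLex_cons_zero_pos {n : ℕ} {u : EuclideanSpace ℝ (Fin n)} (hu : ∀ i, 0 ≤ u i)
    (hu₀ : u ≠ 0) : 0 < toLex (Fin.cons 0 u : Fin (n + 1) → ℝ) := by
  refine Pi.toLex_strictMono (lt_of_le_of_ne (fun i => Fin.cases le_rfl hu i) fun h => ?_)
  exact hu₀ (by ext i; simpa using (congrFun h i.succ).symm)

theorem cons_zero_vecMul_eq_inner {n : ℕ} {κ : Type*} {L : Matrix (Fin (n + 1)) κ ℝ}
    {x : κ → EuclideanSpace ℝ (Fin n)} (hL : ∀ i j, L i.succ j = x j i)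
    (u : EuclideanSpace ℝ (Fin n)) (j : κ) :
    ((Fin.cons 0 u : Fin (n + 1) → ℝ) ᵥ* L) j = ⟪u, x j⟫_ℝ := by
  simp [vecMul, dotProduct, Fin.sum_univ_succ, hL, PiLp.inner_apply, mul_comm]

theorem monotone_apply_of_steps_nonneg {n : ℕ} {ι : Type*}
    {v : Fin (n + 1) → EuclideanSpace ℝ ι} {e : Fin n → EuclideanSpace ℝ ι}
    (he : ∀ j i, 0 ≤ e j i) (hstep : ∀ j, v j.succ = v j.castSucc + e j) (i : ι) :
    Monotone fun j => v j i :=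
  Fin.monotone_iff_le_succ.mpr fun j => by simp [hstep, he]

theorem mul_one_add_min_add_max_nonpos {γ r κ₀ κΓ κh : ℝ} (hγ : 0 ≤ γ) (hr : 0 < r + κ₀)
    (hκΓ : κΓ + κ₀ ≤ r) (hκh : κh ≤ 2 * r) :
    γ * (1 + min 0 ((κΓ - 2 * r) / (r + κ₀))) + max 0 (κh - 2 * r) ≤ 0 := by
  have hdiv : (κΓ - 2 * r) / (r + κ₀) ≤ -1 := by
    rw [div_le_iff₀ hr]
    linarith
  have hmin := min_le_right 0 ((κΓ - 2 * r) / (r + κ₀))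
  rw [max_eq_left (by linarith), add_zero]
  exact mul_nonpos_of_nonneg_of_nonpos hγ (by linarith)

theorem inner_label_nonpos {ι : Type*} [Fintype ι] {u w c p : EuclideanSpace ℝ ι} {t : ℝ}
    (ht₀ : 0 ≤ t) (ht₁ : t ≤ 1) (hu : ∀ i, 0 ≤ u i) (huw : ∀ i, u i ≤ w i)
    (hp : ∀ i, p i ≤ 0) (hc : ‖c‖ ≤ ‖u‖) :
    ⟪u, (1 - t) • c + t • p - w⟫_ℝ ≤ 0 := by
  have hup : ⟪u, p⟫_ℝ ≤ 0 := by
    rw [PiLp.inner_apply]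
    exact Finset.sum_nonpos fun i _ => by
      simpa using mul_nonpos_of_nonpos_of_nonneg (hp i) (hu i)
  have hw : ‖u‖ * ‖u‖ ≤ ⟪u, w⟫_ℝ := by
    rw [← real_inner_self_eq_norm_mul_norm, PiLp.inner_apply, PiLp.inner_apply]
    refine Finset.sum_le_sum fun i _ => ?_
    simp only [RCLike.inner_apply, conj_trivial]
    exact mul_le_mul_of_nonneg_right (huw i) (hu i)
  have huc : (1 - t) * ⟪u, c⟫_ℝ ≤ ‖u‖ * ‖u‖ :=
    calc (1 - t) * ⟪u, c⟫_ℝ ≤ (1 - t) * (‖u‖ * ‖c‖) :=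
          mul_le_mul_of_nonneg_left (real_inner_le_norm u c) (by linarith)
      _ ≤ 1 * (‖u‖ * ‖u‖) := by gcongr; linarith
      _ = ‖u‖ * ‖u‖ := one_mul _
  rw [inner_sub_right, inner_add_right, real_inner_smul_right, real_inner_smul_right]
  linarith [mul_nonpos_of_nonneg_of_nonpos ht₀ hup]

theorem no_complete_simplex_in_region_five_general
    {N : ℕ}
    (Γμ : EuclideanSpace ℝ (Fin N) → EuclideanSpace ℝ (Fin N))
    (hmaps : ∀ v : EuclideanSpace ℝ (Fin N), (∀ i, 0 ≤ v i) → ∀ i, 0 ≤ Γμ v i)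
    (κ₀ κΓ κh δ : ℝ) (hκ₀ : 0 < κ₀) (hκΓ : κh < κΓ) (hδ : 0 < δ)
    (φ : EuclideanSpace ℝ (Fin N) → EuclideanSpace ℝ (Fin N))
    (hφ : ∀ (v : EuclideanSpace ℝ (Fin N)) (i : Fin N),
      φ v i = Γμ v i * (1 + min 0 ((κΓ - 2 * ‖v‖) / (‖v‖ + κ₀)))
        + max 0 (κh - 2 * ‖v‖))
    (c : EuclideanSpace ℝ (Fin N)) (hcnorm : ‖c‖ < κΓ / 2)
    -- the vertices `y^j = (v^j, t_j)` of an `N`-simplex of `K̃₁(δ)`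
    (v : Fin (N + 1) → EuclideanSpace ℝ (Fin N)) (t : Fin (N + 1) → ℝ)
    (hvnonneg : ∀ j i, 0 ≤ v j i) (ht01 : ∀ j, t j = 0 ∨ t j = 1)
    (d : Fin N → EuclideanSpace ℝ (Fin N) × ℝ)
    (hdmem : ∀ j : Fin N,
      (∃ i : Fin N, d j = (δ • EuclideanSpace.single i (1 : ℝ), (0 : ℝ))) ∨
        d j = (0, 1))
    (hstep : ∀ j : Fin N,
      v j.succ = v j.castSucc + (d j).1 ∧ t j.succ = t j.castSucc + (d j).2)
    -- the simplex lies in region Ⅴ'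
    (hfar : ∀ j, κΓ + κ₀ + δ < ‖v j‖)
    -- the labels and the labeling matrix
    (lab : Fin (N + 1) → EuclideanSpace ℝ (Fin N))
    (hlab : ∀ j, lab j = (1 - t j) • c + t j • φ (v j) - v j)
    (L : Matrix (Fin (N + 1)) (Fin (N + 1)) ℝ)
    (hLrow : ∀ (i : Fin N) (j : Fin (N + 1)), L i.succ j = lab j i) :
    ¬ ∃ W : Matrix (Fin (N + 1)) (Fin (N + 1)) ℝ,
        L * W = 1 ∧ ∀ i, LexPosRow (W i) := by
  rintro ⟨W, hLW, hWpos⟩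
  have hd_nonneg : ∀ j i, 0 ≤ (d j).1 i := by
    intro j i
    rcases hdmem j with ⟨k, hk⟩ | hk
    · simp only [hk, PiLp.smul_apply, PiLp.single_apply, smul_eq_mul, mul_ite, mul_one, mul_zero]
      split_ifs <;> positivity
    · simp [hk]
  have hv_mono : ∀ j i, v 0 i ≤ v j i := fun j i =>
    monotone_apply_of_steps_nonneg hd_nonneg (fun j => (hstep j).1) i (Fin.zero_le j)
  have hφ_nonpos : ∀ j i, φ (v j) i ≤ 0 := fun j i => by
    have := hfar j
    have := norm_nonneg c
    rw [hφ]
    exact mul_one_add_min_add_max_nonpos (hmaps _ (hvnonneg j) i) (by linarith)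
      (by linarith) (by linarith [norm_nonneg (v j)])
  have hv₀ : v 0 ≠ 0 := norm_pos_iff.mp (by linarith [hfar 0, norm_nonneg c])
  obtain ⟨j, hj⟩ := exists_pos_vecMul_of_mul_eq_one hLW (fun i => lexPosRow_iff.mp (hWpos i))
    (toLex_cons_zero_pos (hvnonneg 0) hv₀)
  rw [cons_zero_vecMul_eq_inner hLrow, hlab] at hj
  have ht : 0 ≤ t j ∧ t j ≤ 1 := by rcases ht01 j with h | h <;> norm_num [h]
  exact hj.not_ge (inner_label_nonpos ht.1 ht.2 (hvnonneg 0) (hv_mono j) (hφ_nonpos j)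
    (by linarith [hfar 0, norm_nonneg c]))

/-- Proposition (no complete simplices far out): let `Γμ : ℝ^N_+ → ℝ^N_+` be
monotone, `φ` as in the paper, `c ≫ 0` with `‖c‖ < κ_Γ/2`, and let
`y^j = (v^j, t_j)` be the vertices of an `N`-simplex of the two-layered
triangulation `K̃₁(δ)` (i.e. `y^{j+1} = y^j + d^j` with pairwise distinct
increments from `{δe_1, …, δe_N, e_{N+1}}`).  If `‖v^j‖ > κ_Γ + κ_0 + δ`
for all `j` (the simplex lies in region `Ⅴ'`), then the simplex is not
complete. -/
theorem no_complete_simplex_in_region_five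
    {N : ℕ} (hN : 0 < N)
    (Γμ : EuclideanSpace ℝ (Fin N) → EuclideanSpace ℝ (Fin N))
    (hmaps : ∀ v : EuclideanSpace ℝ (Fin N), (∀ i, 0 ≤ v i) → ∀ i, 0 ≤ Γμ v i)
    (hmono : ∀ v w : EuclideanSpace ℝ (Fin N), (∀ i, 0 ≤ v i) → (∀ i, 0 ≤ w i) →
      (∀ i, v i ≤ w i) → ∀ i, Γμ v i ≤ Γμ w i)
    (κ₀ κΓ κh δ : ℝ) (hκ₀ : 0 < κ₀) (hκh : 0 < κh) (hκΓ : κh < κΓ) (hδ : 0 < δ)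
    (φ : EuclideanSpace ℝ (Fin N) → EuclideanSpace ℝ (Fin N))
    (hφ : ∀ (v : EuclideanSpace ℝ (Fin N)) (i : Fin N),
      φ v i = Γμ v i * (1 + min 0 ((κΓ - 2 * ‖v‖) / (‖v‖ + κ₀)))
        + max 0 (κh - 2 * ‖v‖))
    (c : EuclideanSpace ℝ (Fin N)) (hc : ∀ i, 0 < c i) (hcnorm : ‖c‖ < κΓ / 2)
    -- the vertices `y^j = (v^j, t_j)` of an `N`-simplex of `K̃₁(δ)`
    (v : Fin (N + 1) → EuclideanSpace ℝ (Fin N)) (t : Fin (N + 1) → ℝ)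
    (hvnonneg : ∀ j i, 0 ≤ v j i) (ht01 : ∀ j, t j = 0 ∨ t j = 1)
    (d : Fin N → EuclideanSpace ℝ (Fin N) × ℝ)
    (hdinj : Function.Injective d)
    (hdmem : ∀ j : Fin N,
      (∃ i : Fin N, d j = (δ • EuclideanSpace.single i (1 : ℝ), (0 : ℝ))) ∨
        d j = (0, 1))
    (hstep : ∀ j : Fin N,
      v j.succ = v j.castSucc + (d j).1 ∧ t j.succ = t j.castSucc + (d j).2)
    -- the simplex lies in region Ⅴ'
    (hfar : ∀ j, κΓ + κ₀ + δ < ‖v j‖)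
    -- the labels and the labeling matrix
    (lab : Fin (N + 1) → EuclideanSpace ℝ (Fin N))
    (hlab : ∀ j, lab j = (1 - t j) • c + t j • φ (v j) - v j)
    (L : Matrix (Fin (N + 1)) (Fin (N + 1)) ℝ)
    (hLtop : ∀ j, L 0 j = 1)
    (hLrow : ∀ (i : Fin N) (j : Fin (N + 1)), L i.succ j = lab j i) :
    ¬ ∃ W : Matrix (Fin (N + 1)) (Fin (N + 1)) ℝ,
        L * W = 1 ∧ ∀ i, LexPosRow (W i) :=
  no_complete_simplex_in_region_five_general Γμ hmaps κ₀ κΓ κh δ hκ₀ hκΓ hδ φ hφ c hcnorm v t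
    hvnonneg ht01 d hdmem hstep hfar lab hlab L hLrow
end

section
/- Let Γ = (γ_{ij})_{i,j=1}^N be a gain matrix with each γ_{ij} ∈ K∞ ∪ {0}, assume Γ is irreducible, let μ_1, …, μ_N be monotone aggregation functions, and let Γμ(s)_i = μ_i(γ_{i1}(s_1), …, γ_{iN}(s_N)) be the induced gain operator. Let κ_0 > 0, κ_Γ > κ_h > 0, δ > 0, let φ(v) = Γμ(v)·(1 + min{0, (κ_Γ − 2‖v‖)/(‖v‖ + κ_0)}) + max{0, κ_h − 2‖v‖}·e, and let c ∈ ℝ^N with c ≫ 0. Let y^1, …, y^{N+1} ∈ ℝ^N_+ × {0, 1}, y^j = (v^j, t_j), be the vertices of an N-simplex of the two-layered triangulation K̃_1(δ): y^{j+1} = y^j + d^j for j = 1, …, N, where the increments d^j are pairwise distinct elements of {δe_1, …, δe_N, e_{N+1}} (e_i the i-th standard basis vector of ℝ^{N+1}). Assume the simplex lies on the boundary of the positive orthant, i.e., there is an index i* with v^j_{i*} = 0 for all j = 1, …, N+1, and assume ‖v^{N+1}‖ < κ_0 + κ_Γ. Define labels l(y^j) = (1 − t_j)c + t_j φ(v^j)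 − v^j and the (N+1)×(N+1) labeling matrix L whose j-th column is (1, l(y^j)^T)^T. Then the simplex is not complete: there is no matrix W with L·W = I_{N+1} such that every row of W is lexicographically positive. -/
/-- A function `α : ℝ_+ → ℝ_+` is of class `K∞`: continuous, strictly
increasing, unbounded and `α(0) = 0` (stated on `[0,∞)`). -/
def ClassKInf (α : ℝ → ℝ) : Prop :=
  ContinuousOn α (Set.Ici 0) ∧ StrictMonoOn α (Set.Ici 0) ∧ α 0 = 0 ∧
    (∀ x, 0 ≤ x → 0 ≤ α x) ∧ (∀ M : ℝ, ∃ x, 0 ≤ x ∧ M < α x)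

/-- A monotone aggregation function `μ : ℝ^N_+ → ℝ_+`: continuous, positive
(`μ(s) = 0` iff `s = 0`), strictly increasing with respect to `≪`, and
unbounded as `‖s‖ → ∞`. -/
def IsMAF {n : ℕ} (μ : EuclideanSpace ℝ (Fin n) → ℝ) : Prop :=
  ContinuousOn μ {s : EuclideanSpace ℝ (Fin n) | ∀ i, 0 ≤ s i} ∧
    (∀ s : EuclideanSpace ℝ (Fin n), (∀ i, 0 ≤ s i) → 0 ≤ μ s) ∧
    (∀ s : EuclideanSpace ℝ (Fin n), (∀ i, 0 ≤ s i) → (μ s = 0 ↔ s = 0)) ∧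
    (∀ s t : EuclideanSpace ℝ (Fin n), (∀ i, 0 ≤ s i) → (∀ i, 0 ≤ t i) →
      (∀ i, s i < t i) → μ s < μ t) ∧
    (∀ M : ℝ, ∃ C : ℝ, ∀ s : EuclideanSpace ℝ (Fin n), (∀ i, 0 ≤ s i) →
      C ≤ ‖s‖ → M ≤ μ s)

/-
A complete simplex carries convex weights `w` (the first column of `W`) under which its labels
average to zero. Let `y^m` be the last vertex in the support of `w`: the support vertices lie
coordinatewise below `v^m`, so on every zero coordinate `i` of `v^m` (such as `i*`) their labels
are nonnegative, and hence the label of `y^m` vanishes. As `c ≫ 0`, this forces `t_m = 1` and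
`φ(v^m)_i = 0`, i.e. `Γμ(v^m)_i = 0` and `2‖v^m‖ ≥ κ_h > 0`. By irreducibility, a nonnegative
vector with a zero coordinate at whose zero coordinates `Γμ` vanishes is itself zero, since
positivity of one coordinate propagates along the edges of `Γ`; so `v^m = 0`, a contradiction.
-/

open Finset

namespace ClassKInf

variable {α : ℝ → ℝ}

lemma nonneg (hα : ClassKInf α) {x : ℝ} (hx : 0 ≤ x) : 0 ≤ α x :=
  hα.2.2.2.1 x hx

lemma pos (hα : ClassKInf α) {x : ℝ} (hx : 0 < x) : 0 < α x := by
  simpa [hα.2.2.1] using hα.2.1 (Set.mem_Ici.2 le_rfl) (Set.mem_Ici.2 hx.le) hx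

end ClassKInf

namespace IsMAF

variable {n : ℕ} {μ : EuclideanSpace ℝ (Fin n) → ℝ}

lemma nonneg (hμ : IsMAF μ) {s : EuclideanSpace ℝ (Fin n)} (hs : ∀ i, 0 ≤ s i) : 0 ≤ μ s :=
  hμ.2.1 s hs

lemma pos_of_pos_apply (hμ : IsMAF μ) {s : EuclideanSpace ℝ (Fin n)} (hs : ∀ i, 0 ≤ s i)
    {k : Fin n} (hk : 0 < s k) : 0 < μ s := by
  refine (hμ.nonneg hs).lt_of_ne fun h => hk.ne' ?_
  rw [(hμ.2.2.1 s hs).1 h.symm]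
  rfl

end IsMAF

section GainOperator

variable {N : ℕ} {γ : Fin N → Fin N → ℝ → ℝ} {μ : Fin N → EuclideanSpace ℝ (Fin N) → ℝ}
  {Γμ : EuclideanSpace ℝ (Fin N) → EuclideanSpace ℝ (Fin N)} {s : EuclideanSpace ℝ (Fin N)}

lemma gain_apply_nonneg {α : ℝ → ℝ} (hα : ClassKInf α ∨ ∀ x, α x = 0) {x : ℝ} (hx : 0 ≤ x) :
    0 ≤ α x := by
  rcases hα with hK | hzero
  · exact hK.nonneg hx
  · simp [hzero]

lemma gainOp_nonneg (hγ : ∀ i j, ClassKInf (γ i j) ∨ ∀ x, γ i j x = 0) (hμ : ∀ i, IsMAF (μ i))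
    (hΓμ : ∀ s i, Γμ s i = μ i (WithLp.toLp 2 (fun j => γ i j (s j))))
    (hs : ∀ j, 0 ≤ s j) (i : Fin N) : 0 ≤ Γμ s i := by
  rw [hΓμ]
  exact (hμ i).nonneg fun j => gain_apply_nonneg (hγ i j) (hs j)

lemma gainOp_pos (hγ : ∀ i j, ClassKInf (γ i j) ∨ ∀ x, γ i j x = 0) (hμ : ∀ i, IsMAF (μ i))
    (hΓμ : ∀ s i, Γμ s i = μ i (WithLp.toLp 2 (fun j => γ i j (s j))))
    (hs : ∀ j, 0 ≤ s j) {i k : Fin N} (hik : ClassKInf (γ i k)) (hk : 0 < s k) :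
    0 < Γμ s i := by
  rw [hΓμ]
  exact (hμ i).pos_of_pos_apply (fun j => gain_apply_nonneg (hγ i j) (hs j)) (hik.pos hk)

lemma eq_zero_of_gainOp_eq_zero_on_zeros (hγ : ∀ i j, ClassKInf (γ i j) ∨ ∀ x, γ i j x = 0)
    (hirr : ∀ i j : Fin N, Relation.ReflTransGen (fun a b => ClassKInf (γ b a)) i j)
    (hμ : ∀ i, IsMAF (μ i))
    (hΓμ : ∀ s i, Γμ s i = μ i (WithLp.toLp 2 (fun j => γ i j (s j))))
    (hs : ∀ j, 0 ≤ s j) (hzero : ∀ i, s i = 0 → Γμ s i = 0) {i₀ : Fin N} (hi₀ : s i₀ = 0) :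
    s = 0 := by
  ext k
  by_contra hk
  have hpos : ∀ i, Relation.ReflTransGen (fun a b => ClassKInf (γ b a)) k i → 0 < s i := by
    intro i hki
    induction hki with
    | refl => exact (hs k).lt_of_ne' hk
    | tail _ hedge ih =>
      refine (hs _).lt_of_ne' fun hi => ?_
      exact (gainOp_pos hγ hμ hΓμ hs hedge ih).ne' (hzero _ hi)
  exact (hpos i₀ (hirr k i₀)).ne' hi₀

end GainOperator

section Phi

variable {N : ℕ} {Γμ φ : EuclideanSpace ℝ (Fin N) → EuclideanSpace ℝ (Fin N)}
  {κ₀ κΓ κh : ℝ} {x : EuclideanSpace ℝ (Fin N)} {i : Fin N}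

lemma one_add_min_div_pos {r : ℝ} (hκ₀ : 0 < κ₀) (hr : 0 ≤ r) (hrκ : r < κ₀ + κΓ) :
    0 < 1 + min 0 ((κΓ - 2 * r) / (r + κ₀)) := by
  have hquot : -1 < (κΓ - 2 * r) / (r + κ₀) := by
    rw [lt_div_iff₀ (by linarith)]
    linarith
  linarith [lt_min neg_one_lt_zero hquot]

lemma phi_apply_nonneg
    (hφ : ∀ v i, φ v i = Γμ v i * (1 + min 0 ((κΓ - 2 * ‖v‖) / (‖v‖ + κ₀)))
      + max 0 (κh - 2 * ‖v‖))
    (hκ₀ : 0 < κ₀) (hx : ‖x‖ < κ₀ + κΓ) (hΓ : 0 ≤ Γμ x i) : 0 ≤ φ x i := by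
  rw [hφ]
  exact add_nonneg (mul_nonneg hΓ (one_add_min_div_pos hκ₀ (norm_nonneg x) hx).le)
    (le_max_left _ _)

lemma phi_apply_eq_zero
    (hφ : ∀ v i, φ v i = Γμ v i * (1 + min 0 ((κΓ - 2 * ‖v‖) / (‖v‖ + κ₀)))
      + max 0 (κh - 2 * ‖v‖))
    (hκ₀ : 0 < κ₀) (hx : ‖x‖ < κ₀ + κΓ) (hΓ : 0 ≤ Γμ x i) (h : φ x i = 0) :
    Γμ x i = 0 ∧ κh ≤ 2 * ‖x‖ := by
  have hfac := one_add_min_div_pos hκ₀ (norm_nonneg x) hx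
  rw [hφ] at h
  obtain ⟨hgain, hmax⟩ :=
    (add_eq_zero_iff_of_nonneg (mul_nonneg hΓ hfac.le) (le_max_left _ _)).1 h
  exact ⟨(mul_eq_zero.1 hgain).resolve_right hfac.ne', by linarith [max_eq_left_iff.1 hmax]⟩

end Phi

section Labels

variable {N : ℕ} {c p x : EuclideanSpace ℝ (Fin N)} {t : ℝ} {i : Fin N}

lemma label_apply_nonneg (ht : t = 0 ∨ t = 1) (hc : 0 < c i) (hp : 0 ≤ p i) (hx : x i = 0) :
    0 ≤ ((1 - t) • c + t • p - x) i := by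
  rcases ht with rfl | rfl <;> simp [hx, hc.le, hp]

lemma label_apply_eq_zero (ht : t = 0 ∨ t = 1) (hc : 0 < c i) (hx : x i = 0)
    (h : ((1 - t) • c + t • p - x) i = 0) : t = 1 ∧ p i = 0 := by
  rcases ht with rfl | rfl
  · exact absurd (by simpa [hx] using h) hc.ne'
  · simpa [hx] using h

end Labels

lemma LexPosRow.zero_le {n : ℕ} {w : Fin (n + 1) → ℝ} (h : LexPosRow w) : 0 ≤ w 0 := by
  obtain ⟨j, hj, hbefore⟩ := h
  rcases (Fin.zero_le j).eq_or_lt with rfl | hj0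
  · exact hj.le
  · exact (hbefore 0 hj0).ge

lemma exists_convex_weights_of_lexPos_right_inverse {n : ℕ}
    {L W : Matrix (Fin (n + 1)) (Fin (n + 1)) ℝ} (hL : ∀ j, L 0 j = 1) (hLW : L * W = 1)
    (hW : ∀ i, LexPosRow (W i)) :
    ∃ w : Fin (n + 1) → ℝ,
      (∀ j, 0 ≤ w j) ∧ ∑ j, w j = 1 ∧ ∀ i : Fin n, ∑ j, L i.succ j * w j = 0 := by
  refine ⟨fun j => W j 0, fun j => (hW j).zero_le, ?_, fun i => ?_⟩
  · simpa [Matrix.mul_apply, hL] using congrFun (congrFun hLW 0) 0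
  · simpa [Matrix.mul_apply, Matrix.one_apply, Fin.succ_ne_zero] using
      congrFun (congrFun hLW i.succ) 0

lemma eq_zero_of_sum_mul_eq_zero {ι : Type*} [Fintype ι] {a w : ι → ℝ} (hw : ∀ j, 0 ≤ w j)
    (ha : ∀ j, 0 < w j → 0 ≤ a j) (hsum : ∑ j, a j * w j = 0) {j : ι} (hj : 0 < w j) :
    a j = 0 := by
  have hterm : ∀ j ∈ univ, 0 ≤ a j * w j := fun j _ => by
    rcases (hw j).eq_or_lt with h | h
    · simp [← h]
    · exact mul_nonneg (ha j h) h.le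
  exact (mul_eq_zero.1 ((sum_eq_zero_iff_of_nonneg hterm).1 hsum j (mem_univ j))).resolve_right
    hj.ne'

lemma exists_max_pos_of_sum_pos {ι : Type*} [Fintype ι] [LinearOrder ι] {w : ι → ℝ}
    (h : 0 < ∑ j, w j) : ∃ m, 0 < w m ∧ ∀ j, 0 < w j → j ≤ m := by
  obtain ⟨j, -, hj⟩ := exists_lt_of_sum_lt (s := univ) (f := 0) (g := w) (by simpa using h)
  obtain ⟨m, hm, hm_max⟩ := (univ.filter (0 < w ·)).exists_max_image id ⟨j, by simpa using hj⟩
  exact ⟨m, (mem_filter.1 hm).2, fun j hj => hm_max j (by simpa using hj)⟩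

lemma EuclideanSpace.norm_le_norm_of_nonneg_of_le {ι : Type*} [Fintype ι]
    {x y : EuclideanSpace ℝ ι} (hx : ∀ i, 0 ≤ x i) (hxy : ∀ i, x i ≤ y i) : ‖x‖ ≤ ‖y‖ := by
  rw [EuclideanSpace.norm_eq, EuclideanSpace.norm_eq]
  gcongr with i
  rw [Real.norm_eq_abs, Real.norm_eq_abs]
  exact abs_le_abs (hxy i) (by linarith [hx i, hxy i])

lemma vertex_apply_monotone {N : ℕ} {δ : ℝ} (hδ : 0 ≤ δ)
    {v : Fin (N + 1) → EuclideanSpace ℝ (Fin N)} {d : Fin N → EuclideanSpace ℝ (Fin N) × ℝ}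
    (hdmem : ∀ j : Fin N,
      (∃ i : Fin N, d j = (δ • EuclideanSpace.single i (1 : ℝ), (0 : ℝ))) ∨ d j = (0, 1))
    (hstep : ∀ j : Fin N, v j.succ = v j.castSucc + (d j).1) (i : Fin N) :
    Monotone fun j => v j i := by
  refine Fin.monotone_iff_le_succ.2 fun j => ?_
  have hd : 0 ≤ (d j).1 i := by
    rcases hdmem j with ⟨k, hk⟩ | hk
    · rw [hk, PiLp.smul_apply, PiLp.single_apply, smul_eq_mul]
      positivity
    · simp [hk]
  simp only [hstep j, PiLp.add_apply]
  linarith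

theorem no_complete_simplex_on_boundary_general
    {N : ℕ}
    (γ : Fin N → Fin N → ℝ → ℝ)
    (hγ : ∀ i j, ClassKInf (γ i j) ∨ ∀ x, γ i j x = 0)
    (hirr : ∀ i j : Fin N,
      Relation.ReflTransGen (fun a b => ClassKInf (γ b a)) i j)
    (μ : Fin N → EuclideanSpace ℝ (Fin N) → ℝ) (hμ : ∀ i, IsMAF (μ i))
    (Γμ : EuclideanSpace ℝ (Fin N) → EuclideanSpace ℝ (Fin N))
    (hΓμ : ∀ (s : EuclideanSpace ℝ (Fin N)) (i : Fin N),
      Γμ s i = μ i (WithLp.toLp 2 (fun j => γ i j (s j))))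
    (κ₀ κΓ κh δ : ℝ) (hκ₀ : 0 < κ₀) (hκh : 0 < κh) (hδ : 0 < δ)
    (φ : EuclideanSpace ℝ (Fin N) → EuclideanSpace ℝ (Fin N))
    (hφ : ∀ (v : EuclideanSpace ℝ (Fin N)) (i : Fin N),
      φ v i = Γμ v i * (1 + min 0 ((κΓ - 2 * ‖v‖) / (‖v‖ + κ₀)))
        + max 0 (κh - 2 * ‖v‖))
    (c : EuclideanSpace ℝ (Fin N)) (hc : ∀ i, 0 < c i)
    -- the vertices `y^j = (v^j, t_j)` of an `N`-simplex of `K̃₁(δ)`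
    (v : Fin (N + 1) → EuclideanSpace ℝ (Fin N)) (t : Fin (N + 1) → ℝ)
    (hvnonneg : ∀ j i, 0 ≤ v j i) (ht01 : ∀ j, t j = 0 ∨ t j = 1)
    (d : Fin N → EuclideanSpace ℝ (Fin N) × ℝ)
    (hdmem : ∀ j : Fin N,
      (∃ i : Fin N, d j = (δ • EuclideanSpace.single i (1 : ℝ), (0 : ℝ))) ∨
        d j = (0, 1))
    (hstep : ∀ j : Fin N,
      v j.succ = v j.castSucc + (d j).1 ∧ t j.succ = t j.castSucc + (d j).2)
    -- the simplex lies on the boundary of the positive orthant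
    (istar : Fin N) (hbd : ∀ j, v j istar = 0)
    -- and not too far out
    (hnorm : ‖v (Fin.last N)‖ < κ₀ + κΓ)
    -- the labels and the labeling matrix
    (lab : Fin (N + 1) → EuclideanSpace ℝ (Fin N))
    (hlab : ∀ j, lab j = (1 - t j) • c + t j • φ (v j) - v j)
    (L : Matrix (Fin (N + 1)) (Fin (N + 1)) ℝ)
    (hLtop : ∀ j, L 0 j = 1)
    (hLrow : ∀ (i : Fin N) (j : Fin (N + 1)), L i.succ j = lab j i) :
    ¬ ∃ W : Matrix (Fin (N + 1)) (Fin (N + 1)) ℝ,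
        L * W = 1 ∧ ∀ i, LexPosRow (W i) := by
  rintro ⟨W, hLW, hW⟩
  obtain ⟨w, hw0, hw1, hwL⟩ := exists_convex_weights_of_lexPos_right_inverse hLtop hLW hW
  obtain ⟨m, hm, hm_max⟩ := exists_max_pos_of_sum_pos (hw1 ▸ one_pos)
  have hmono := vertex_apply_monotone hδ.le hdmem fun j => (hstep j).1
  have hvnorm : ∀ j, ‖v j‖ < κ₀ + κΓ := fun j =>
    (EuclideanSpace.norm_le_norm_of_nonneg_of_le (hvnonneg j)
      fun i => hmono i (Fin.le_last j)).trans_lt hnorm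
  have hΓ : ∀ j i, 0 ≤ Γμ (v j) i := fun j => gainOp_nonneg hγ hμ hΓμ (hvnonneg j)
  have hlab_m : ∀ i, v m i = 0 → lab m i = 0 := by
    intro i hi
    refine eq_zero_of_sum_mul_eq_zero (a := fun j => lab j i) hw0 (fun j hj => ?_)
      (by simpa [hLrow] using hwL i) hm
    have hji : v j i = 0 := le_antisymm (hi ▸ hmono i (hm_max j hj)) (hvnonneg j i)
    rw [hlab]
    exact label_apply_nonneg (ht01 j) (hc i) (phi_apply_nonneg hφ hκ₀ (hvnorm j) (hΓ j i)) hji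
  have hφ_m : ∀ i, v m i = 0 → t m = 1 ∧ φ (v m) i = 0 := fun i hi =>
    label_apply_eq_zero (ht01 m) (hc i) hi (hlab m ▸ hlab_m i hi)
  have hφ_zero : ∀ i, v m i = 0 → Γμ (v m) i = 0 ∧ κh ≤ 2 * ‖v m‖ := fun i hi =>
    phi_apply_eq_zero hφ hκ₀ (hvnorm m) (hΓ m i) (hφ_m i hi).2
  have hv_m : v m = 0 := eq_zero_of_gainOp_eq_zero_on_zeros hγ hirr hμ hΓμ (hvnonneg m)
    (fun i hi => (hφ_zero i hi).1) (hbd m)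
  have hκ := (hφ_zero istar (hbd m)).2
  rw [hv_m, norm_zero] at hκ
  linarith

/-- Theorem (no complete simplices on the boundary of the positive orthant):
let `Γ` be an irreducible gain matrix with entries in `K∞ ∪ {0}`, `μ_i`
monotone aggregation functions, `Γμ` the induced gain operator and `φ` as in
the paper, `c ≫ 0`.  If the vertices `y^j = (v^j, t_j)` of an `N`-simplex of
the two-layered triangulation `K̃₁(δ)` lie on the boundary of the positive
orthant (some coordinate `i*` vanishes identically) and
`‖v^{N+1}‖ < κ_0 + κ_Γ`, then the simplex is not complete. -/
theorem no_complete_simplex_on_boundary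
    {N : ℕ} (hN : 0 < N)
    (γ : Fin N → Fin N → ℝ → ℝ)
    (hγ : ∀ i j, ClassKInf (γ i j) ∨ ∀ x, γ i j x = 0)
    (hirr : ∀ i j : Fin N,
      Relation.ReflTransGen (fun a b => ClassKInf (γ b a)) i j)
    (μ : Fin N → EuclideanSpace ℝ (Fin N) → ℝ) (hμ : ∀ i, IsMAF (μ i))
    (Γμ : EuclideanSpace ℝ (Fin N) → EuclideanSpace ℝ (Fin N))
    (hΓμ : ∀ (s : EuclideanSpace ℝ (Fin N)) (i : Fin N),
      Γμ s i = μ i (WithLp.toLp 2 (fun j => γ i j (s j))))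
    (κ₀ κΓ κh δ : ℝ) (hκ₀ : 0 < κ₀) (hκh : 0 < κh) (hκΓ : κh < κΓ) (hδ : 0 < δ)
    (φ : EuclideanSpace ℝ (Fin N) → EuclideanSpace ℝ (Fin N))
    (hφ : ∀ (v : EuclideanSpace ℝ (Fin N)) (i : Fin N),
      φ v i = Γμ v i * (1 + min 0 ((κΓ - 2 * ‖v‖) / (‖v‖ + κ₀)))
        + max 0 (κh - 2 * ‖v‖))
    (c : EuclideanSpace ℝ (Fin N)) (hc : ∀ i, 0 < c i)
    -- the vertices `y^j = (v^j, t_j)` of an `N`-simplex of `K̃₁(δ)`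
    (v : Fin (N + 1) → EuclideanSpace ℝ (Fin N)) (t : Fin (N + 1) → ℝ)
    (hvnonneg : ∀ j i, 0 ≤ v j i) (ht01 : ∀ j, t j = 0 ∨ t j = 1)
    (d : Fin N → EuclideanSpace ℝ (Fin N) × ℝ)
    (hdinj : Function.Injective d)
    (hdmem : ∀ j : Fin N,
      (∃ i : Fin N, d j = (δ • EuclideanSpace.single i (1 : ℝ), (0 : ℝ))) ∨
        d j = (0, 1))
    (hstep : ∀ j : Fin N,
      v j.succ = v j.castSucc + (d j).1 ∧ t j.succ = t j.castSucc + (d j).2)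
    -- the simplex lies on the boundary of the positive orthant
    (istar : Fin N) (hbd : ∀ j, v j istar = 0)
    -- and not too far out
    (hnorm : ‖v (Fin.last N)‖ < κ₀ + κΓ)
    -- the labels and the labeling matrix
    (lab : Fin (N + 1) → EuclideanSpace ℝ (Fin N))
    (hlab : ∀ j, lab j = (1 - t j) • c + t j • φ (v j) - v j)
    (L : Matrix (Fin (N + 1)) (Fin (N + 1)) ℝ)
    (hLtop : ∀ j, L 0 j = 1)
    (hLrow : ∀ (i : Fin N) (j : Fin (N + 1)), L i.succ j = lab j i) :
    ¬ ∃ W : Matrix (Fin (N + 1)) (Fin (N + 1)) ℝ,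
        L * W = 1 ∧ ∀ i, LexPosRow (W i) :=
  no_complete_simplex_on_boundary_general γ hγ hirr μ hμ Γμ hΓμ κ₀ κΓ κh δ hκ₀ hκh hδ φ hφ c hc v t
    hvnonneg ht01 d hdmem hstep istar hbd hnorm lab hlab L hLtop hLrow
end

section
/- Let Γμ: ℝ^N_+ → ℝ^N_+ be monotone and let w ∈ ℝ^N_+ be such that the iterates satisfy lim_{k→∞} Γμ^k(w) = 0. Then the small gain condition holds on the order interval [0, w]: for every s ∈ ℝ^N_+ with s ≤ w and s ≠ 0 it is not the case that Γμ(s) ≥ s. -/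
/-! If `s ≤ Γ s`, monotonicity propagates this to `s ≤ Γ^k s ≤ Γ^k w` for every `k`; letting
`k → ∞` gives `s ≤ 0`, so `s = 0` on the nonnegative orthant. Since `Γ` is monotone only on the
orthant, the iteration has to stay there, which is why invariance of the orthant is needed. -/

open Filter Function Set

section Iterate

variable {α : Type*} [Preorder α] {f : α → α} {S : Set α}

theorem MonotoneOn.iterate (hf : MonotoneOn f S) (hS : MapsTo f S S) (n : ℕ) :
    MonotoneOn f^[n] S := by
  induction n with
  | zero => exact monotoneOn_id
  | succ n ih =>
    intro x hx y hy hxy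
    rw [iterate_succ_apply, iterate_succ_apply]
    exact ih (hS hx) (hS hy) (hf hx hy hxy)

theorem MonotoneOn.le_iterate_of_le_apply (hf : MonotoneOn f S) (hS : MapsTo f S S) {x : α}
    (hx : x ∈ S) (hxf : x ≤ f x) (n : ℕ) : x ≤ f^[n] x := by
  induction n with
  | zero => exact le_rfl
  | succ n ih =>
    rw [iterate_succ_apply']
    exact hxf.trans (hf hx (hS.iterate n hx) ih)

theorem MonotoneOn.le_of_tendsto_iterate [TopologicalSpace α] [ClosedIciTopology α]
    (hf : MonotoneOn f S) (hS : MapsTo f S S) {x y z : α} (hx : x ∈ S) (hy : y ∈ S)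
    (hxy : x ≤ y) (hxf : x ≤ f x) (hlim : Tendsto (fun n => f^[n] y) atTop (nhds z)) :
    x ≤ z :=
  ge_of_tendsto' hlim fun n =>
    (hf.le_iterate_of_le_apply hS hx hxf n).trans (hf.iterate hS n hx hy hxy)

end Iterate

/-- If `Γμ : ℝ^N_+ → ℝ^N_+` is monotone and the iterates `Γμ^k(w)` converge to
`0`, then the small gain condition holds on the order interval `[0, w]`:
for every `s ∈ ℝ^N_+` with `s ≤ w`, `s ≠ 0`, it is not the case that
`Γμ(s) ≥ s`. -/
theorem small_gain_on_order_interval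
    {N : ℕ}
    (Γμ : EuclideanSpace ℝ (Fin N) → EuclideanSpace ℝ (Fin N))
    (hmaps : ∀ v : EuclideanSpace ℝ (Fin N), (∀ i, 0 ≤ v i) → ∀ i, 0 ≤ Γμ v i)
    (hmono : ∀ v w : EuclideanSpace ℝ (Fin N), (∀ i, 0 ≤ v i) → (∀ i, 0 ≤ w i) →
      (∀ i, v i ≤ w i) → ∀ i, Γμ v i ≤ Γμ w i)
    (w : EuclideanSpace ℝ (Fin N)) (hw : ∀ i, 0 ≤ w i)
    (hlim : Filter.Tendsto (fun k => Γμ^[k] w) Filter.atTop (nhds 0)) :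
    ∀ s : EuclideanSpace ℝ (Fin N), (∀ i, 0 ≤ s i) → (∀ i, s i ≤ w i) →
      s ≠ 0 → ¬ (∀ i, s i ≤ Γμ s i) := by
  intro s hs hsw hne hle
  -- `EuclideanSpace` carries no order, so we conjugate `Γμ` to the ordered space `Fin N → ℝ`.
  set Γ : (Fin N → ℝ) → (Fin N → ℝ) := fun v => WithLp.ofLp (Γμ (WithLp.toLp 2 v))
  have hconj (k : ℕ) (v) : WithLp.ofLp (Γμ^[k] v) = Γ^[k] (WithLp.ofLp v) :=
    Semiconj.iterate_right (f := WithLp.ofLp) (fun _ => rfl) k v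
  have hΓ_maps : MapsTo Γ (Ici 0) (Ici 0) := fun v hv => hmaps _ hv
  have hΓ_mono : MonotoneOn Γ (Ici 0) := fun v hv u hu huv => hmono _ _ hv hu huv
  have hΓ_lim : Tendsto (fun k => Γ^[k] (WithLp.ofLp w)) atTop (nhds 0) := by
    simpa only [comp_def, hconj] using
      ((PiLp.continuous_ofLp 2 _).tendsto' _ _ (WithLp.ofLp_zero 2)).comp hlim
  have hs_nonpos : WithLp.ofLp s ≤ 0 :=
    hΓ_mono.le_of_tendsto_iterate hΓ_maps hs hw hsw hle hΓ_lim
  exact hne (WithLp.ofLp_injective 2 (le_antisymm hs_nonpos hs))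
end

section
/- Let Γμ: ℝ^N_+ → ℝ^N_+ be monotone and strictly increasing, let w ∈ ℝ^N_+ satisfy w ≫ 0, Γμ(w) ≪ w and lim_{k→∞} Γμ^k(w) = 0, and define σ: [0,1] → ℝ^N_+ by σ(0) = 0 and σ(r) = (k² + k)·[(1/k − r)·Γμ^k(w) + (r − 1/(k+1))·Γμ^{k−1}(w)] for r ∈ (1/(k+1), 1/k], k ∈ ℕ. Then every point of the path except the origin is a decay point: Γμ(σ(r)) ≪ σ(r) for all r ∈ (0, 1]. In particular, for any b ∈ ℝ^N_+ with Γμ(b) ≪ b and any λ ∈ [0, 1), the convex combination s = λ·Γμ(b) + (1 − λ)·b satisfies Γμ(s) ≪ s. -/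
private lemma convdecay {N : ℕ}
    (Γμ : EuclideanSpace ℝ (Fin N) → EuclideanSpace ℝ (Fin N))
    (hmaps : ∀ v : EuclideanSpace ℝ (Fin N), (∀ i, 0 ≤ v i) → ∀ i, 0 ≤ Γμ v i)
    (hmono : ∀ v w : EuclideanSpace ℝ (Fin N), (∀ i, 0 ≤ v i) → (∀ i, 0 ≤ w i) →
      (∀ i, v i ≤ w i) → ∀ i, Γμ v i ≤ Γμ w i)
    (b : EuclideanSpace ℝ (Fin N)) (hb : ∀ i, 0 ≤ b i) (hdec : ∀ i, Γμ b i < b i)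
    (lam : ℝ) (h0 : 0 ≤ lam) (h1 : lam < 1) :
    ∀ i, Γμ (lam • Γμ b + (1 - lam) • b) i < (lam • Γμ b + (1 - lam) • b) i := by
  set s := lam • Γμ b + (1 - lam) • b with hs
  have hsi : ∀ i, s i = lam * Γμ b i + (1 - lam) * b i := by
    intro i; simp [hs, PiLp.add_apply, PiLp.smul_apply, smul_eq_mul]
  have hΓb := hmaps b hb
  have hsnn : ∀ i, 0 ≤ s i := fun i => by
    rw [hsi]
    have h1' := hΓb i; have h2' := hb i
    nlinarith
  have hsleb : ∀ i, s i ≤ b i := fun i => by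
    rw [hsi]
    nlinarith [mul_le_mul_of_nonneg_left (le_of_lt (hdec i)) h0]
  have hlt : ∀ i, Γμ b i < s i := fun i => by
    rw [hsi]
    nlinarith [mul_pos (show (0:ℝ) < 1 - lam by linarith) (sub_pos.mpr (hdec i))]
  intro i
  exact lt_of_le_of_lt (hmono s b hsnn hb hsleb i) (hlt i)

/-- Every point of the linear-interpolation path `σ` (except the origin) is a
decay point of `Γμ`. -/
theorem path_points_are_decay_points
    {N : ℕ}
    (Γμ : EuclideanSpace ℝ (Fin N) → EuclideanSpace ℝ (Fin N))
    (hmaps : ∀ v : EuclideanSpace ℝ (Fin N), (∀ i, 0 ≤ v i) → ∀ i, 0 ≤ Γμ v i)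
    (hmono : ∀ v w : EuclideanSpace ℝ (Fin N), (∀ i, 0 ≤ v i) → (∀ i, 0 ≤ w i) →
      (∀ i, v i ≤ w i) → ∀ i, Γμ v i ≤ Γμ w i)
    (hsincr : ∀ v w : EuclideanSpace ℝ (Fin N), (∀ i, 0 ≤ v i) →
      (∀ i, 0 ≤ w i) → (∀ i, v i < w i) → ∀ i, Γμ v i < Γμ w i)
    (w : EuclideanSpace ℝ (Fin N)) (hw : ∀ i, 0 < w i)
    (hdecay : ∀ i, Γμ w i < w i)
    (hlim : Filter.Tendsto (fun k => Γμ^[k] w) Filter.atTop (nhds 0))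
    (σ : ℝ → EuclideanSpace ℝ (Fin N))
    (hσ0 : σ 0 = 0)
    (hσ : ∀ k : ℕ, 0 < k → ∀ r : ℝ, 1 / ((k : ℝ) + 1) < r → r ≤ 1 / (k : ℝ) →
      σ r = ((k : ℝ) ^ 2 + k) •
        ((1 / (k : ℝ) - r) • Γμ^[k] w + (r - 1 / ((k : ℝ) + 1)) • Γμ^[k - 1] w)) :
    (∀ r : ℝ, 0 < r → r ≤ 1 → ∀ i, Γμ (σ r) i < σ r i) ∧
      (∀ b : EuclideanSpace ℝ (Fin N), (∀ i, 0 ≤ b i) → (∀ i, Γμ b i < b i) →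
        ∀ lam : ℝ, 0 ≤ lam → lam < 1 →
          ∀ i, Γμ (lam • Γμ b + (1 - lam) • b) i < (lam • Γμ b + (1 - lam) • b) i) := by
  have hnn : ∀ n : ℕ, ∀ i, 0 ≤ Γμ^[n] w i := by
    intro n
    induction n with
    | zero => exact fun i => (hw i).le
    | succ n ih =>
        intro i
        rw [Function.iterate_succ_apply']
        exact hmaps _ ih i
  have hdec : ∀ n : ℕ, ∀ i, Γμ^[n+1] w i < Γμ^[n] w i := by
    intro n
    induction n with
    | zero => simpa using hdecay
    | succ n ih =>
        intro i
        rw [Function.iterate_succ_apply' Γμ (n+1)]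
        conv_rhs => rw [Function.iterate_succ_apply' Γμ n]
        exact hsincr _ _ (hnn (n+1)) (hnn n) ih i
  constructor
  · intro r hr hr1
    set k := ⌊1/r⌋₊ with hkdef
    have h1r : (1:ℝ) ≤ 1/r := one_le_one_div hr hr1
    have hk1 : 1 ≤ k := Nat.le_floor (by exact_mod_cast h1r)
    have hk1pos : 0 < k := hk1
    have hkR : (1:ℝ) ≤ (k:ℝ) := by exact_mod_cast hk1
    have hkpos : (0:ℝ) < (k:ℝ) := by linarith
    have hk1pos' : (0:ℝ) < (k:ℝ) + 1 := by linarith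
    have hfl : (k:ℝ) ≤ 1/r := Nat.floor_le (by positivity)
    have hfu : 1/r < (k:ℝ) + 1 := Nat.lt_floor_add_one _
    have hr_le : r ≤ 1/(k:ℝ) := by
      rw [le_div_iff₀ hkpos]
      have := (le_div_iff₀ hr).mp hfl
      nlinarith
    have hr_gt : 1/((k:ℝ)+1) < r := by
      rw [div_lt_iff₀ hk1pos']
      have := (div_lt_iff₀ hr).mp hfu
      nlinarith
    have hσk := hσ k hk1pos r hr_gt hr_le
    set lam : ℝ := ((k:ℝ)^2 + k) * (1/(k:ℝ) - r) with hlamdef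
    have hk0 : (k:ℝ) ≠ 0 := ne_of_gt hkpos
    have hk10 : (k:ℝ) + 1 ≠ 0 := ne_of_gt hk1pos'
    have hone : ((k:ℝ)^2 + k) * (1/(k:ℝ) - 1/((k:ℝ)+1)) = 1 := by
      field_simp
      ring
    have hpos2 : (0:ℝ) < (k:ℝ)^2 + k := by positivity
    have h0 : 0 ≤ lam :=
      mul_nonneg hpos2.le (sub_nonneg.mpr hr_le)
    have h1 : lam < 1 := by
      have hmul := mul_lt_mul_of_pos_left
        (show 1/(k:ℝ) - r < 1/(k:ℝ) - 1/((k:ℝ)+1) by linarith) hpos2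
      rw [hone] at hmul
      exact hmul
    have hcompl : ((k:ℝ)^2 + k) * (r - 1/((k:ℝ)+1)) = 1 - lam := by
      have h : lam + ((k:ℝ)^2 + k) * (r - 1/((k:ℝ)+1))
          = ((k:ℝ)^2 + k) * (1/(k:ℝ) - 1/((k:ℝ)+1)) := by
        rw [hlamdef]; ring
      linarith [hone]
    set b : EuclideanSpace ℝ (Fin N) := Γμ^[k-1] w with hbdef
    have hk' : k - 1 + 1 = k := Nat.succ_pred_eq_of_pos hk1pos
    have hΓb : Γμ b = Γμ^[k] w := by
      rw [hbdef, ← Function.iterate_succ_apply' Γμ (k-1) w]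
      congr 1
    have hdecb : ∀ i, Γμ b i < b i := by
      intro i
      have := hdec (k-1) i
      rw [hk'] at this
      rw [hΓb]
      exact this
    have hσeq : σ r = lam • Γμ b + (1 - lam) • b := by
      rw [hσk, hΓb, smul_add, smul_smul, smul_smul, hcompl, hlamdef]
    rw [hσeq]
    exact convdecay Γμ hmaps hmono b (hnn (k-1)) hdecb lam h0 h1
  · intro b hb hdecb lam h0 h1
    exact convdecay Γμ hmaps hmono b hb hdecb lam h0 h1
end

section
/- Let Γμ: ℝ^N_+ → ℝ^N_+ be continuous, monotone and strictly increasing, and let w ∈ ℝ^N_+ satisfy w ≫ 0, Γμ(w) ≪ w and lim_{k→∞} Γμ^k(w) = 0. Define σ: [0,1] → ℝ^N_+ by σ(0) = 0 and σ(r) = (k² + k)·[(1/k − r)·Γμ^k(w) + (r − 1/(k+1))·Γμ^{k−1}(w)] for r ∈ (1/(k+1), 1/k], k ∈ ℕ. Then σ is continuous on [0,1], satisfies σ(1/k) = Γμ^{k−1}(w) for every k ∈ ℕ and σ(1) = w, and each component function σ_i: [0,1] → ℝ_+ is strictly increasing. -/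
/-!
Fix a coordinate `i` and write `a k = Γμ^[k] w i`. Strict monotonicity of `Γμ` propagates
`Γμ w ≪ w` along the orbit, so `a` is strictly decreasing; as it tends to `0`, it is positive.
On `[1/(k+1), 1/k]` the component `σ · i` is affine from `a k` up to `a (k-1)`, and gluing
finitely many such pieces shows that it is continuous and strictly increasing on `[1/(n+1), 1]`.
At `0` right continuity comes for free from monotonicity, since the values `σ (1/(n+1)) i = a n`
come arbitrarily close to `σ 0 i = 0`.
-/

open Set Filter Topology

theorem one_div_natCast_add_one_le_one (n : ℕ) : 1 / ((n : ℝ) + 1) ≤ 1 :=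
  div_le_one_of_le₀ (by linarith) (by positivity)

theorem Icc_one_div_succ_eq_union (n : ℕ) :
    Icc (1 / (((n + 1 : ℕ) : ℝ) + 1)) 1 =
      Icc (1 / ((n : ℝ) + 2)) (1 / ((n : ℝ) + 1)) ∪ Icc (1 / ((n : ℝ) + 1)) 1 := by
  rw [Icc_union_Icc_eq_Icc (one_div_le_one_div_of_le (by positivity) (by linarith))
    (one_div_natCast_add_one_le_one n)]
  push_cast
  ring_nf

theorem StrictAnti.pos_of_tendsto_zero {a : ℕ → ℝ} (ha : StrictAnti a)
    (ha_lim : Tendsto a atTop (𝓝 0)) (n : ℕ) : 0 < a n :=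
  (ha.antitone.le_of_tendsto ha_lim (n + 1)).trans_lt (ha n.lt_succ_self)

/-- On `(1/(k+1), 1/k]` the function `f` is the affine map with `f (1/(k+1)) = a k` and
`f (1/k) = a (k-1)`. -/
def InterpolatesAtReciprocals (a : ℕ → ℝ) (f : ℝ → ℝ) : Prop :=
  ∀ k : ℕ, 0 < k → ∀ r : ℝ, 1 / ((k : ℝ) + 1) < r → r ≤ 1 / (k : ℝ) →
    f r = ((k : ℝ) ^ 2 + k) * ((1 / (k : ℝ) - r) * a k + (r - 1 / ((k : ℝ) + 1)) * a (k - 1))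

namespace InterpolatesAtReciprocals

variable {a : ℕ → ℝ} {f : ℝ → ℝ}

theorem eq_of_mem_Icc (h : InterpolatesAtReciprocals a f) (n : ℕ) {r : ℝ}
    (hr : r ∈ Icc (1 / ((n : ℝ) + 2)) (1 / ((n : ℝ) + 1))) :
    f r = a (n + 1) + ((n + 1) * (n + 2)) * (r - 1 / (n + 2)) * (a n - a (n + 1)) := by
  rcases hr.1.eq_or_lt with rfl | hlt
  · -- the left end point is the right end point of the next piece
    rw [h (n + 2) (by omega) _
      (by push_cast; exact one_div_lt_one_div_of_lt (by positivity) (by linarith))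
      (by push_cast; rfl)]
    push_cast
    field_simp
    ring
  · rw [h (n + 1) n.succ_pos r (lt_of_eq_of_lt (by push_cast; ring) hlt)
      (by push_cast; exact hr.2)]
    push_cast
    field_simp
    ring

theorem apply_one_div (h : InterpolatesAtReciprocals a f) (n : ℕ) :
    f (1 / ((n : ℝ) + 1)) = a n := by
  rw [h.eq_of_mem_Icc n ⟨by gcongr; linarith, le_rfl⟩]
  field_simp
  ring

theorem strictMonoOn_Icc_of_lt (h : InterpolatesAtReciprocals a f) {n : ℕ}
    (han : a (n + 1) < a n) : StrictMonoOn f (Icc (1 / ((n : ℝ) + 2)) (1 / ((n : ℝ) + 1))) := by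
  intro r hr s hs hrs
  rw [h.eq_of_mem_Icc n hr, h.eq_of_mem_Icc n hs]
  have := sub_pos.2 han
  gcongr

theorem continuousOn_Icc (h : InterpolatesAtReciprocals a f) (n : ℕ) :
    ContinuousOn f (Icc (1 / ((n : ℝ) + 2)) (1 / ((n : ℝ) + 1))) :=
  (by fun_prop : Continuous fun r : ℝ =>
      a (n + 1) + ((n + 1) * (n + 2)) * (r - 1 / (n + 2)) * (a n - a (n + 1))).continuousOn.congr
    fun _ hr => h.eq_of_mem_Icc n hr

theorem strictMonoOn_Icc_one_div (h : InterpolatesAtReciprocals a f) (ha : StrictAnti a) :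
    ∀ n : ℕ, StrictMonoOn f (Icc (1 / ((n : ℝ) + 1)) 1)
  | 0 => by simp
  | n + 1 => by
    rw [Icc_one_div_succ_eq_union n]
    exact (h.strictMonoOn_Icc_of_lt (ha n.lt_succ_self)).union
      (h.strictMonoOn_Icc_one_div ha n)
      (isGreatest_Icc (one_div_le_one_div_of_le (by positivity) (by linarith)))
      (isLeast_Icc (one_div_natCast_add_one_le_one n))

theorem continuousOn_Icc_one_div (h : InterpolatesAtReciprocals a f) :
    ∀ n : ℕ, ContinuousOn f (Icc (1 / ((n : ℝ) + 1)) 1)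
  | 0 => by simp
  | n + 1 => by
    rw [Icc_one_div_succ_eq_union n]
    exact (h.continuousOn_Icc n).union_of_isClosed (h.continuousOn_Icc_one_div n)
      isClosed_Icc isClosed_Icc

theorem strictMonoOn_Icc_zero_one (h : InterpolatesAtReciprocals a f) (ha : StrictAnti a)
    (ha_lim : Tendsto a atTop (𝓝 0)) (hf0 : f 0 = 0) : StrictMonoOn f (Icc 0 1) := by
  intro r hr s hs hrs
  rcases hr.1.eq_or_lt with rfl | hr0
  · obtain ⟨n, hn⟩ := exists_nat_one_div_lt hrs
    calc f 0 = 0 := hf0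
      _ < a n := ha.pos_of_tendsto_zero ha_lim n
      _ = f (1 / ((n : ℝ) + 1)) := (h.apply_one_div n).symm
      _ < f s := h.strictMonoOn_Icc_one_div ha n
        ⟨le_rfl, one_div_natCast_add_one_le_one n⟩ ⟨hn.le, hs.2⟩ hn
  · obtain ⟨n, hn⟩ := exists_nat_one_div_lt hr0
    exact h.strictMonoOn_Icc_one_div ha n ⟨hn.le, hr.2⟩ ⟨hn.le.trans hrs.le, hs.2⟩ hrs

theorem continuousOn_Icc_zero_one (h : InterpolatesAtReciprocals a f) (ha : StrictAnti a)
    (ha_lim : Tendsto a atTop (𝓝 0)) (hf0 : f 0 = 0) : ContinuousOn f (Icc 0 1) := by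
  intro x hx
  rcases hx.1.eq_or_lt with rfl | hx0
  · have hmono := h.strictMonoOn_Icc_zero_one ha ha_lim hf0
    refine (hmono.continuousWithinAt_right_of_exists_between (Icc_mem_nhdsGE zero_lt_one)
      fun b hb => ?_).mono fun _ hy => hy.1
    obtain ⟨n, hn⟩ := (ha_lim.eventually (gt_mem_nhds (hf0 ▸ hb))).exists
    refine ⟨1 / ((n : ℝ) + 1), ⟨by positivity, one_div_natCast_add_one_le_one n⟩, ?_⟩
    rw [h.apply_one_div n, hf0]
    exact ⟨ha.pos_of_tendsto_zero ha_lim n, hn.le⟩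
  · obtain ⟨n, hn⟩ := exists_nat_one_div_lt hx0
    refine (h.continuousOn_Icc_one_div n x ⟨hn.le, hx.2⟩).mono_of_mem_nhdsWithin ?_
    exact mem_of_superset (inter_mem_nhdsWithin _ (Ioi_mem_nhds hn))
      fun y hy => ⟨le_of_lt hy.2, hy.1.2⟩

end InterpolatesAtReciprocals

section Iterates

variable {ι : Type*} {Γ : EuclideanSpace ℝ ι → EuclideanSpace ℝ ι}
  {w : EuclideanSpace ℝ ι}

theorem iterate_apply_nonneg
    (hmaps : ∀ v : EuclideanSpace ℝ ι, (∀ i, 0 ≤ v i) → ∀ i, 0 ≤ Γ v i)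
    (hw : ∀ i, 0 ≤ w i) (k : ℕ) : ∀ i, 0 ≤ Γ^[k] w i :=
  MapsTo.iterate (s := {v : EuclideanSpace ℝ ι | ∀ i, 0 ≤ v i}) hmaps k hw

theorem strictAnti_iterate_apply
    (hmaps : ∀ v : EuclideanSpace ℝ ι, (∀ i, 0 ≤ v i) → ∀ i, 0 ≤ Γ v i)
    (hsincr : ∀ u v : EuclideanSpace ℝ ι, (∀ i, 0 ≤ u i) →
      (∀ i, 0 ≤ v i) → (∀ i, u i < v i) → ∀ i, Γ u i < Γ v i)
    (hw : ∀ i, 0 ≤ w i) (hdecay : ∀ i, Γ w i < w i) (i : ι) :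
    StrictAnti fun k => Γ^[k] w i := by
  suffices h : ∀ k i, Γ^[k + 1] w i < Γ^[k] w i from strictAnti_nat_of_succ_lt fun k => h k i
  intro k
  induction k with
  | zero => simpa using hdecay
  | succ k ih =>
    simpa only [Function.iterate_succ_apply'] using
      hsincr _ _ (iterate_apply_nonneg hmaps hw (k + 1)) (iterate_apply_nonneg hmaps hw k) ih

end Iterates

theorem path_sigma_continuous_and_strictly_increasing_general
    {N : ℕ}
    (Γμ : EuclideanSpace ℝ (Fin N) → EuclideanSpace ℝ (Fin N))
    (hmaps : ∀ v : EuclideanSpace ℝ (Fin N), (∀ i, 0 ≤ v i) → ∀ i, 0 ≤ Γμ v i)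
    (hsincr : ∀ v w : EuclideanSpace ℝ (Fin N), (∀ i, 0 ≤ v i) →
      (∀ i, 0 ≤ w i) → (∀ i, v i < w i) → ∀ i, Γμ v i < Γμ w i)
    (w : EuclideanSpace ℝ (Fin N)) (hw : ∀ i, 0 < w i)
    (hdecay : ∀ i, Γμ w i < w i)
    (hlim : Filter.Tendsto (fun k => Γμ^[k] w) Filter.atTop (nhds 0))
    (σ : ℝ → EuclideanSpace ℝ (Fin N))
    (hσ0 : σ 0 = 0)
    (hσ : ∀ k : ℕ, 0 < k → ∀ r : ℝ, 1 / ((k : ℝ) + 1) < r → r ≤ 1 / (k : ℝ) →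
      σ r = ((k : ℝ) ^ 2 + k) •
        ((1 / (k : ℝ) - r) • Γμ^[k] w + (r - 1 / ((k : ℝ) + 1)) • Γμ^[k - 1] w)) :
    ContinuousOn σ (Set.Icc 0 1) ∧
      (∀ k : ℕ, 0 < k → σ (1 / (k : ℝ)) = Γμ^[k - 1] w) ∧
      σ 1 = w ∧
      ∀ i : Fin N, StrictMonoOn (fun r => σ r i) (Set.Icc 0 1) := by
  have hanti i := strictAnti_iterate_apply hmaps hsincr (fun i => (hw i).le) hdecay i
  have hlim_apply i : Tendsto (fun k => Γμ^[k] w i) atTop (𝓝 0) :=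
    ((PiLp.continuous_apply 2 _ i).tendsto 0).comp hlim
  have hinterp i : InterpolatesAtReciprocals (fun k => Γμ^[k] w i) (fun r => σ r i) :=
    fun k hk r h₁ h₂ => by
      simp only [hσ k hk r h₁ h₂, PiLp.smul_apply, PiLp.add_apply, smul_eq_mul]
  have hσ0_apply i : σ 0 i = 0 := by simp [hσ0]
  have hval : ∀ k : ℕ, 0 < k → σ (1 / (k : ℝ)) = Γμ^[k - 1] w := by
    intro k hk
    obtain ⟨n, rfl⟩ := Nat.exists_eq_add_one_of_ne_zero hk.ne'
    ext i
    simpa using (hinterp i).apply_one_div n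
  refine ⟨?_, hval, by simpa using hval 1 one_pos,
    fun i => (hinterp i).strictMonoOn_Icc_zero_one (hanti i) (hlim_apply i) (hσ0_apply i)⟩
  exact (PiLp.continuous_toLp 2 _).comp_continuousOn <| continuousOn_pi.2 fun i =>
    (hinterp i).continuousOn_Icc_zero_one (hanti i) (hlim_apply i) (hσ0_apply i)

/-- Properties of the linear-interpolation path `σ`: if `Γμ` is continuous,
monotone and strictly increasing on `ℝ^N_+`, `w ≫ 0`, `Γμ(w) ≪ w` and
`Γμ^k(w) → 0`, then `σ` is continuous on `[0,1]`, satisfies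
`σ(1/k) = Γμ^{k−1}(w)` for every `k ≥ 1` and `σ(1) = w`, and every component
function `σ_i` is strictly increasing on `[0,1]`. -/
theorem path_sigma_continuous_and_strictly_increasing
    {N : ℕ}
    (Γμ : EuclideanSpace ℝ (Fin N) → EuclideanSpace ℝ (Fin N))
    (hcont : ContinuousOn Γμ {s : EuclideanSpace ℝ (Fin N) | ∀ i, 0 ≤ s i})
    (hmaps : ∀ v : EuclideanSpace ℝ (Fin N), (∀ i, 0 ≤ v i) → ∀ i, 0 ≤ Γμ v i)
    (hmono : ∀ v w : EuclideanSpace ℝ (Fin N), (∀ i, 0 ≤ v i) → (∀ i, 0 ≤ w i) →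
      (∀ i, v i ≤ w i) → ∀ i, Γμ v i ≤ Γμ w i)
    (hsincr : ∀ v w : EuclideanSpace ℝ (Fin N), (∀ i, 0 ≤ v i) →
      (∀ i, 0 ≤ w i) → (∀ i, v i < w i) → ∀ i, Γμ v i < Γμ w i)
    (w : EuclideanSpace ℝ (Fin N)) (hw : ∀ i, 0 < w i)
    (hdecay : ∀ i, Γμ w i < w i)
    (hlim : Filter.Tendsto (fun k => Γμ^[k] w) Filter.atTop (nhds 0))
    (σ : ℝ → EuclideanSpace ℝ (Fin N))
    (hσ0 : σ 0 = 0)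
    (hσ : ∀ k : ℕ, 0 < k → ∀ r : ℝ, 1 / ((k : ℝ) + 1) < r → r ≤ 1 / (k : ℝ) →
      σ r = ((k : ℝ) ^ 2 + k) •
        ((1 / (k : ℝ) - r) • Γμ^[k] w + (r - 1 / ((k : ℝ) + 1)) • Γμ^[k - 1] w)) :
    ContinuousOn σ (Set.Icc 0 1) ∧
      (∀ k : ℕ, 0 < k → σ (1 / (k : ℝ)) = Γμ^[k - 1] w) ∧
      σ 1 = w ∧
      ∀ i : Fin N, StrictMonoOn (fun r => σ r i) (Set.Icc 0 1) :=
  path_sigma_continuous_and_strictly_increasing_general Γμ hmaps hsincr w hw hdecay hlim σ hσ0 hσ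
end

section
/- Let a, b, c > 0 with b > ac and define the monod function g: ℝ_+ → ℝ_+ by g(x) = bx/(c + x). Set x* := (b − ac)/a > 0, K := c and λ := c/(c + x*). Then λ ∈ (0, 1), a·x* = g(x*), and for all x ≥ 0 the two-sided estimate ((K + x*)/(K + x))·x ≤ a^{−1}·g(x) ≤ x* + λ·|x − x*| holds. -/
/-- The monod function `g(x) = bx/(c + x)` with `b > ac` satisfies Assumption
(A): with `x* = (b − ac)/a`, `K = c` and `λ = c/(c + x*)` one has `λ ∈ (0,1)`,
`a·x* = g(x*)`, and `((K + x*)/(K + x))·x ≤ a⁻¹·g(x) ≤ x* + λ·|x − x*|` for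
all `x ≥ 0`. -/
theorem monod_satisfies_assumption_A
    (a b c : ℝ) (ha : 0 < a) (hb : 0 < b) (hc : 0 < c) (hbac : a * c < b)
    (g : ℝ → ℝ) (hg : ∀ x, g x = b * x / (c + x))
    (xstar K lam : ℝ)
    (hxstar : xstar = (b - a * c) / a) (hK : K = c)
    (hlam : lam = c / (c + xstar)) :
    (0 < lam ∧ lam < 1) ∧ a * xstar = g xstar ∧
      ∀ x : ℝ, 0 ≤ x →
        ((K + xstar) / (K + x)) * x ≤ a⁻¹ * g x ∧
          a⁻¹ * g x ≤ xstar + lam * |x - xstar| := by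
  have hx : 0 < xstar := by
    rw [hxstar]; exact div_pos (by linarith) ha
  have hcxs : 0 < c + xstar := by linarith
  have hb' : b = a * (c + xstar) := by
    rw [hxstar]; field_simp; ring
  have hlam' : lam = a * c / b := by
    rw [hlam, hb']; field_simp
  refine ⟨⟨?_, ?_⟩, ?_, ?_⟩
  · rw [hlam']; exact div_pos (mul_pos ha hc) hb
  · rw [hlam']; exact (div_lt_one hb).mpr hbac
  · rw [hg, hb']; field_simp
  · intro x hxx
    have hcx : 0 < c + x := by linarith
    have key : a⁻¹ * g x = xstar + c * (x - xstar) / (c + x) := by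
      rw [hg, hb']; field_simp; ring
    constructor
    · rw [hK, hg]
      rw [hb']
      rw [le_iff_lt_or_eq]; right
      field_simp
    · rw [key, hlam]
      have : c * (x - xstar) / (c + x) ≤ c / (c + xstar) * |x - xstar| := by
        rcases le_or_gt xstar x with h | h
        · rw [abs_of_nonneg (by linarith), div_mul_eq_mul_div,
            div_le_div_iff₀ hcx hcxs]
          nlinarith [mul_nonneg hc.le (sub_nonneg.mpr h)]
        · rw [abs_of_neg (by linarith)]
          have h1 : c * (x - xstar) / (c + x) ≤ 0 :=
            div_nonpos_of_nonpos_of_nonneg (by nlinarith) hcx.le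
          have h2 : 0 ≤ c / (c + xstar) * -(x - xstar) := by
            apply mul_nonneg (div_nonneg hc.le hcxs.le); linarith
          linarith
      linarith
end
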